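/- arXiv:0910.2682 — 2 statements merged into one kernel-verified Lean document; each statement's English description precedes it below -/
import Mathlib

section
/- Let x, y ∈ K with x ≠ 0, x + y ≠ 0, and v(x) ≤ v(x + y), and let γ ∈ Γ with γ ≥ v(x + y) − v(x). Suppose z_1 = x_1′ + y_1′ and z_2 = x_2′ + y_2′, where rv_γ(x_j′) = rv_γ(x) and rv_γ(y_j′) = rv_γ(y) for j = 1, 2. Then v(z_1) = v(z_2). -/
/-!
The axioms make `v` an additive valuation, so the ultrametric inequality applies. If
`rv_γ(x′) = rv_γ(x)` and `rv_γ(y′) = rv_γ(y)`, then `x′ − x` and `y′ − y` both have value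
strictly above `v(x + y)`: the first because `v(x + y) ≤ v(x) + γ`, the second because moreover
`v(x) ≤ v(y)`. Hence `(x′ + y′) − (x + y)` has value above `v(x + y)`, which forces
`v(x′ + y′) = v(x + y)`. Both `z₁` and `z₂` therefore have value `v(x + y)`.
-/

/-- `rv_δ(x) = rv_δ(y)`: either both are zero, or both are nonzero and
`v(x − y) > v(y) + δ`. -/
def RvEq {K : Type*} [Field K] {Γ : Type*} [AddCommGroup Γ] [LinearOrder Γ] [IsOrderedAddMonoid Γ]
    (v : K → WithTop Γ) (δ : WithTop Γ) (x y : K) : Prop :=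
  (x = 0 ∧ y = 0) ∨ (x ≠ 0 ∧ y ≠ 0 ∧ v y + δ < v (x - y))

section

variable {K : Type*} [Field K] {Γ : Type*} [AddCommGroup Γ] [LinearOrder Γ]
  [IsOrderedAddMonoid Γ]

lemma map_one_eq_zero_of_map_mul (v : K → WithTop Γ) (hv0 : ∀ x : K, v x = ⊤ ↔ x = 0)
    (hvmul : ∀ x y : K, v (x * y) = v x + v y) : v 1 = 0 := by
  have hne : v 1 ≠ ⊤ := fun h => one_ne_zero ((hv0 1).mp h)
  have hidem : v 1 = v 1 + v 1 := by rw [← hvmul, one_mul]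
  lift v 1 to Γ using hne with a
  norm_cast at hidem ⊢
  exact left_eq_add.mp hidem

variable (w : AddValuation K (WithTop Γ))

lemma RvEq.lt_map_sub {δ c : WithTop Γ} {a b : K} (h : RvEq w δ a b) (hc : c ≠ ⊤)
    (hcb : c ≤ w b + δ) : c < w (a - b) := by
  rcases h with ⟨rfl, rfl⟩ | ⟨-, -, h⟩
  · simpa [lt_top_iff_ne_top] using hc
  · exact hcb.trans_lt h

lemma map_add_eq_of_rvEq {δ : WithTop Γ} {x y x' y' : K} (hxy : x + y ≠ 0)
    (hle : w x ≤ w (x + y)) (hδ : w (x + y) ≤ w x + δ)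
    (hx' : RvEq w δ x' x) (hy' : RvEq w δ y' y) : w (x' + y') = w (x + y) := by
  have hxy_top : w (x + y) ≠ ⊤ := w.ne_top_iff.mpr hxy
  have hvy : w x ≤ w y := by simpa using w.map_le_sub hle le_rfl
  apply w.map_eq_of_lt_sub
  rw [show x' + y' - (x + y) = (x' - x) + (y' - y) by ring]
  exact w.map_lt_add (hx'.lt_map_sub w hxy_top hδ)
    (hy'.lt_map_sub w hxy_top (hδ.trans (add_le_add_left hvy _)))

end

theorem stmt_5_general {K : Type*} [Field K] {Γ : Type*} [AddCommGroup Γ] [LinearOrder Γ] [IsOrderedAddMonoid Γ]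
    (v : K → WithTop Γ)
    (hv0 : ∀ x : K, v x = ⊤ ↔ x = 0)
    (hvmul : ∀ x y : K, v (x * y) = v x + v y)
    (hvadd : ∀ x y : K, min (v x) (v y) ≤ v (x + y))
    (x y : K) (hxy : x + y ≠ 0) (hle : v x ≤ v (x + y))
    (γ : Γ) (hγ : v (x + y) ≤ v x + (γ : WithTop Γ))
    (x1 y1 x2 y2 z1 z2 : K)
    (hx1 : RvEq v (γ : WithTop Γ) x1 x) (hy1 : RvEq v (γ : WithTop Γ) y1 y)
    (hx2 : RvEq v (γ : WithTop Γ) x2 x) (hy2 : RvEq v (γ : WithTop Γ) y2 y)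
    (hz1 : z1 = x1 + y1) (hz2 : z2 = x2 + y2) :
    v z1 = v z2 := by
  let w : AddValuation K (WithTop Γ) :=
    AddValuation.of v ((hv0 0).mpr rfl) (map_one_eq_zero_of_map_mul v hv0 hvmul) hvadd hvmul
  have h1 : w (x1 + y1) = w (x + y) := map_add_eq_of_rvEq w hxy hle hγ hx1 hy1
  have h2 : w (x2 + y2) = w (x + y) := map_add_eq_of_rvEq w hxy hle hγ hx2 hy2
  rw [hz1, hz2]
  exact h1.trans h2.symm

/-- If `x ≠ 0`, `x + y ≠ 0`, `v(x) ≤ v(x + y)`, and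
`γ ≥ v(x + y) − v(x)` (i.e. `v(x+y) ≤ v(x) + γ`), and `z_j = x_j′ + y_j′` with
`rv_γ(x_j′) = rv_γ(x)` and `rv_γ(y_j′) = rv_γ(y)` for `j = 1, 2`,
then `v(z_1) = v(z_2)`. -/
theorem stmt_5 {K : Type*} [Field K] {Γ : Type*} [AddCommGroup Γ] [LinearOrder Γ] [IsOrderedAddMonoid Γ]
    (v : K → WithTop Γ) (hsurj : Function.Surjective v)
    (hv0 : ∀ x : K, v x = ⊤ ↔ x = 0)
    (hvmul : ∀ x y : K, v (x * y) = v x + v y)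
    (hvadd : ∀ x y : K, min (v x) (v y) ≤ v (x + y))
    (x y : K) (hx : x ≠ 0) (hxy : x + y ≠ 0) (hle : v x ≤ v (x + y))
    (γ : Γ) (hγ : v (x + y) ≤ v x + (γ : WithTop Γ))
    (x1 y1 x2 y2 z1 z2 : K)
    (hx1 : RvEq v (γ : WithTop Γ) x1 x) (hy1 : RvEq v (γ : WithTop Γ) y1 y)
    (hx2 : RvEq v (γ : WithTop Γ) x2 x) (hy2 : RvEq v (γ : WithTop Γ) y2 y)
    (hz1 : z1 = x1 + y1) (hz2 : z2 = x2 + y2) :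
    v z1 = v z2 :=
  stmt_5_general v hv0 hvmul hvadd x y hxy hle γ hγ x1 y1 x2 y2 z1 z2 hx1 hy1 hx2 hy2 hz1 hz2
end

section
/- Suppose K has characteristic 0. Let α ∈ K, let f(x) = Σ_{i=0}^d a_i (x − α)^i be a nonzero polynomial over K, let β ∈ K with β ≠ α, and set m = max{ i ≤ d : ∀ j ≤ d, v(a_i(β − α)^i) ≤ v(a_j(β − α)^j) }. Then v(f^{(m)}(β)) = v(m!) + v(a_m), where f^{(m)} is the m-th derivative of f. -/
open Polynomial

/-!
Expanding, `f^{(m)}(β) = Σ_i a_i · i(i-1)⋯(i-m+1) · (β - α)^(i-m)`. The terms with `i < m`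
vanish and the term `i = m` is `m! a_m`. For `i > m`, maximality of `m` gives
`v(a_m (β-α)^m) < v(a_i (β-α)^i)`; cancelling `v((β-α)^m)` and using that the falling factorial
is `m!` times a binomial coefficient (an integer, of nonnegative valuation), the term `i = m`
has strictly smaller valuation than every other one, so it alone determines `v(f^{(m)}(β))`.
-/

theorem WithTop.eq_zero_of_add_self_eq {Γ : Type*} [AddMonoid Γ] [IsLeftCancelAdd Γ]
    {g : WithTop Γ} (hg : g ≠ ⊤) (h : g = g + g) : g = 0 := by
  lift g to Γ using hg
  norm_cast at h ⊢
  exact left_eq_add.mp h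

namespace AddValuation

section Ring

variable {R Γ₀ : Type*} [Ring R] [LinearOrderedAddCommMonoidWithTop Γ₀] (v : AddValuation R Γ₀)

theorem map_sum_eq_of_lt {ι : Type*} [DecidableEq ι] {s : Finset ι} {f : ι → R} {j : ι}
    (hj : j ∈ s) (hf : ∀ i ∈ s \ {j}, v (f j) < v (f i)) :
    v (∑ i ∈ s, f i) = v (f j) :=
  Valuation.map_sum_eq_of_lt v hj hf

theorem map_natCast_nonneg (n : ℕ) : 0 ≤ v n := by
  induction n with
  | zero => simp
  | succ n ih => exact_mod_cast v.map_le_add ih v.map_one.ge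

theorem map_le_map_mul_natCast (x : R) (n : ℕ) : v x ≤ v (x * n) := by
  rw [v.map_mul]
  exact le_add_of_nonneg_right (v.map_natCast_nonneg n)

end Ring

theorem map_mul_factorial_lt_of_lt {K Γ : Type*} [Field K] [AddCommGroup Γ] [LinearOrder Γ]
    [IsOrderedAddMonoid Γ] (v : AddValuation K (WithTop Γ)) {x b c : K} (hx : x ≠ 0)
    {m i : ℕ} (hm : (m.factorial : K) ≠ 0) (hmi : m ≤ i)
    (h : v (b * x ^ m) < v (c * x ^ i)) :
    v (b * m.factorial) < v (c * (i.descFactorial m * x ^ (i - m))) := by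
  have hcancel : v b < v (c * x ^ (i - m)) := by
    rw [← Nat.sub_add_cancel hmi, pow_add, ← mul_assoc, v.map_mul, v.map_mul] at h
    exact (WithTop.add_lt_add_iff_right (v.ne_top_iff.mpr (pow_ne_zero m hx))).mp h
  calc v (b * m.factorial) = v b + v (m.factorial : K) := v.map_mul _ _
    _ < v (c * x ^ (i - m)) + v (m.factorial : K) :=
      WithTop.add_lt_add_right (v.ne_top_iff.mpr hm) hcancel
    _ ≤ v (c * x ^ (i - m)) + v (i.descFactorial m : K) := by
      gcongr
      rw [Nat.descFactorial_eq_factorial_mul_choose, Nat.cast_mul]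
      exact v.map_le_map_mul_natCast _ _
    _ = v (c * (i.descFactorial m * x ^ (i - m))) := by
      rw [← v.map_mul]; ring_nf

end AddValuation

theorem Polynomial.eval_iterate_derivative_sum_C_mul_X_sub_C_pow {R : Type*} [CommRing R]
    (s : Finset ℕ) (a : ℕ → R) (α β : R) (m : ℕ) :
    (derivative^[m] (∑ i ∈ s, C (a i) * (X - C α) ^ i)).eval β =
      ∑ i ∈ s, a i * (i.descFactorial m * (β - α) ^ (i - m)) := by
  simp only [iterate_derivative_sum, iterate_derivative_C_mul, iterate_derivative_X_sub_pow,
    eval_finsetSum, nsmul_eq_mul, eval_mul, eval_C, eval_pow, eval_natCast, eval_sub, eval_X]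

theorem stmt_17_general {K : Type*} [Field K] [CharZero K]
    {Γ : Type*} [AddCommGroup Γ] [LinearOrder Γ] [IsOrderedAddMonoid Γ]
    (v : K → WithTop Γ)
    (hv0 : ∀ x : K, v x = ⊤ ↔ x = 0)
    (hvmul : ∀ x y : K, v (x * y) = v x + v y)
    (hvadd : ∀ x y : K, min (v x) (v y) ≤ v (x + y))
    (α : K) (d : ℕ) (a : ℕ → K) (f : K[X])
    (hf : f = ∑ i ∈ Finset.range (d + 1), C (a i) * (X - C α) ^ i)
    (hf0 : f ≠ 0)
    (β : K) (hβ : β ≠ α)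
    (m : ℕ) (hmd : m ≤ d)
    (hmmin : ∀ j ≤ d, v (a m * (β - α) ^ m) ≤ v (a j * (β - α) ^ j))
    (hmmax : ∀ i ≤ d, (∀ j ≤ d, v (a i * (β - α) ^ i) ≤ v (a j * (β - α) ^ j)) → i ≤ m) :
    v ((derivative^[m] f).eval β) = v ((m.factorial : K)) + v (a m) := by
  have hv1 : v 1 = 0 :=
    WithTop.eq_zero_of_add_self_eq (by simp [hv0]) (by simpa using hvmul 1 1)
  let w : AddValuation K (WithTop Γ) := AddValuation.of v ((hv0 0).2 rfl) hv1 hvadd hvmul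
  have hβα : β - α ≠ 0 := sub_ne_zero.mpr hβ
  have hmf : (m.factorial : K) ≠ 0 := Nat.cast_ne_zero.mpr m.factorial_ne_zero
  have ham : a m ≠ 0 := by
    rintro ham
    refine hf0 (hf ▸ Finset.sum_eq_zero fun j hj => ?_)
    have hj := hmmin j (Nat.lt_succ_iff.mp (Finset.mem_range.mp hj))
    rw [ham, zero_mul, (hv0 0).2 rfl, top_le_iff, hv0, mul_eq_zero] at hj
    simp [hj.resolve_right (pow_ne_zero j hβα)]
  change w _ = w _ + w _
  rw [hf, eval_iterate_derivative_sum_C_mul_X_sub_C_pow,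
    w.map_sum_eq_of_lt (Finset.mem_range.mpr (Nat.lt_succ_of_le hmd))]
  · simp only [Nat.descFactorial_self, Nat.sub_self, pow_zero, mul_one, w.map_mul, add_comm]
  intro i hi
  obtain ⟨hid, him⟩ : i ≤ d ∧ i ≠ m := by simpa [Nat.lt_succ_iff] using hi
  simp only [Nat.descFactorial_self, Nat.sub_self, pow_zero, mul_one]
  rcases him.lt_or_gt with hlt | hgt
  · rw [Nat.descFactorial_eq_zero_iff_lt.mpr hlt, Nat.cast_zero, zero_mul, mul_zero, w.map_zero]
    exact lt_top_iff_ne_top.mpr (w.ne_top_iff.mpr (mul_ne_zero ham hmf))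
  · refine w.map_mul_factorial_lt_of_lt hβα hmf hgt.le ?_
    obtain ⟨j, hjd, hj⟩ : ∃ j ≤ d, v (a j * (β - α) ^ j) < v (a i * (β - α) ^ i) := by
      by_contra! h
      exact hgt.not_ge (hmmax i hid h)
    exact (hmmin j hjd).trans_lt hj

/-- Suppose `K` has characteristic `0`. Let
`f(x) = Σ_{i=0}^d a_i (x − α)^i` be nonzero, `β ≠ α`, and let `m` be the largest
`i ≤ d` such that `v(a_i(β − α)^i) ≤ v(a_j(β − α)^j)` for all `j ≤ d`.  Then
`v(f^{(m)}(β)) = v(m!) + v(a_m)`. -/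
theorem stmt_17 {K : Type*} [Field K] [CharZero K]
    {Γ : Type*} [AddCommGroup Γ] [LinearOrder Γ] [IsOrderedAddMonoid Γ]
    (v : K → WithTop Γ) (hsurj : Function.Surjective v)
    (hv0 : ∀ x : K, v x = ⊤ ↔ x = 0)
    (hvmul : ∀ x y : K, v (x * y) = v x + v y)
    (hvadd : ∀ x y : K, min (v x) (v y) ≤ v (x + y))
    (α : K) (d : ℕ) (a : ℕ → K) (f : K[X])
    (hf : f = ∑ i ∈ Finset.range (d + 1), C (a i) * (X - C α) ^ i)
    (hf0 : f ≠ 0)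
    (β : K) (hβ : β ≠ α)
    (m : ℕ) (hmd : m ≤ d)
    (hmmin : ∀ j ≤ d, v (a m * (β - α) ^ m) ≤ v (a j * (β - α) ^ j))
    (hmmax : ∀ i ≤ d, (∀ j ≤ d, v (a i * (β - α) ^ i) ≤ v (a j * (β - α) ^ j)) → i ≤ m) :
    v ((derivative^[m] f).eval β) = v ((m.factorial : K)) + v (a m) :=
  stmt_17_general v hv0 hvmul hvadd α d a f hf hf0 β hβ m hmd hmmin hmmax
end
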